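/- Quadratic programming on the simplex, exact solution: let μ_1 ≤ ⋯ ≤ μ_K and κ_1,…,κ_K ∈ ℝ (no positivity assumption on κ_i − μ_i²). Then max over λ ∈ Δ^K of (λᵀκ − (λᵀμ)²) equals max{ max_{1≤i≤K} (κ_i − μ_i²), max_{1≤i<j≤K} h_{ij}(μ_{ij}) }, with h_{ij}(x) = x² − 2μ_i x + κ_i and μ_{ij} = (μ_i ∨ (κ_j − κ_i)/(2(μ_j − μ_i))) ∧ μ_j if μ_i < μ_j, μ_{ij} = μ_i otherwise. -/

import Mathlib

/-!
Writing `h_i(a) = a² - 2 μ_i a + κ_i`, one has `Σ λ_i h_i(a) = λᵀκ - (λᵀμ)² + (a - λᵀμ)²`, so the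
objective is at most `max_i h_i(a)` for every `a`. Let `a` minimise this upper envelope on
`[min μ, max μ]`. An active parabola with its vertex at `a` makes the envelope equal to
`κ_i - μ_i²`; otherwise minimality forces active parabolas with `μ_i < a < μ_j`, and then
`h_i(a) = h_j(a)` pins `a` down as `(κ_j - κ_i) / (2(μ_j - μ_i))`, giving a pair term. Conversely
every candidate value is reached, or beaten, by a vertex of the simplex or a two-point mixture.
-/

open Finset Set Filter Topology

theorem eventually_sup'_lt_of_active {ι X α : Type*} [Fintype ι] [Nonempty ι] [TopologicalSpace X]
    [LinearOrder α] [TopologicalSpace α] [OrderTopology α] {f : ι → X → α} {x : X} {l : Filter X}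
    (hl : l ≤ 𝓝 x) (hf : ∀ i, ContinuousAt (f i) x)
    (hact : ∀ i, f i x = univ.sup' univ_nonempty (fun j ↦ f j x) → ∀ᶠ y in l, f i y < f i x) :
    ∀ᶠ y in l, univ.sup' univ_nonempty (fun j ↦ f j y) < univ.sup' univ_nonempty (fun j ↦ f j x) := by
  refine (eventually_all.2 fun i ↦ ?_).mono fun y hy ↦ (sup'_lt_iff _).2 fun i _ ↦ hy i
  rcases (le_sup' (fun j ↦ f j x) (mem_univ i)).lt_or_eq with hlt | heq
  · exact hl ((hf i).eventually_lt_const hlt)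
  · exact (hact i heq).mono fun y hy ↦ heq ▸ hy

theorem sub_mul_sub_clamp_nonneg {α : Type*} [Ring α] [LinearOrder α] [IsStrictOrderedRing α]
    {lo hi x : α} (h : lo ≤ hi) :
    0 ≤ (min (max lo x) hi - lo) * (x - min (max lo x) hi) := by
  rcases le_total x lo with h₁ | h₁ <;> rcases le_total x hi with h₂ | h₂
  · simp [max_eq_left h₁, min_eq_left h]
  · simp [max_eq_left h₁, min_eq_left h]
  · simp [max_eq_right h₁, min_eq_left h₂]
  · rw [max_eq_right h₁, min_eq_right h₂]
    exact mul_nonneg (sub_nonneg.2 h) (sub_nonneg.2 h₂)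

section

variable {ι : Type*} (μ κ : ι → ℝ)

/-- If `μ i` and `κ i` are the mean and second moment of the `i`-th distribution, this is its mean
squared deviation from `a`, and `mixtureVariance μ κ l` is the variance of the mixture with
weights `l`. -/
def meanSqDev (i : ι) (a : ℝ) : ℝ := a ^ 2 - 2 * μ i * a + κ i

theorem meanSqDev_self (i : ι) : meanSqDev μ κ i (μ i) = κ i - μ i ^ 2 := by
  unfold meanSqDev; ring

theorem continuous_meanSqDev (i : ι) : Continuous (meanSqDev μ κ i) := by
  unfold meanSqDev; fun_prop

theorem clamp_eq_of_meanSqDev_eq {i j : ι} {a : ℝ} (hia : μ i < a) (haj : a < μ j)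
    (h : meanSqDev μ κ i a = meanSqDev μ κ j a) :
    min (max (μ i) ((κ j - κ i) / (2 * (μ j - μ i)))) (μ j) = a := by
  have hc₀ : (κ j - κ i) / (2 * (μ j - μ i)) = a := by
    rw [div_eq_iff (by linarith)]
    unfold meanSqDev at h
    linarith
  rw [hc₀, max_eq_right hia.le, min_eq_left haj.le]

variable [Fintype ι]

def mixtureVariance (l : ι → ℝ) : ℝ := ∑ i, l i * κ i - (∑ i, l i * μ i) ^ 2

def maxMeanSqDev [Nonempty ι] (a : ℝ) : ℝ := univ.sup' univ_nonempty fun i ↦ meanSqDev μ κ i a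

theorem meanSqDev_le_maxMeanSqDev [Nonempty ι] (i : ι) (a : ℝ) :
    meanSqDev μ κ i a ≤ maxMeanSqDev μ κ a :=
  le_sup' (fun j ↦ meanSqDev μ κ j a) (mem_univ i)

theorem sum_mul_meanSqDev {l : ι → ℝ} (hl : ∑ i, l i = 1) (a : ℝ) :
    ∑ i, l i * meanSqDev μ κ i a = mixtureVariance μ κ l + (a - ∑ i, l i * μ i) ^ 2 := by
  have : ∑ i, l i * meanSqDev μ κ i a
      = a ^ 2 * ∑ i, l i - 2 * a * ∑ i, l i * μ i + ∑ i, l i * κ i := by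
    simp only [meanSqDev, mul_sum, ← sum_sub_distrib, ← sum_add_distrib]
    exact sum_congr rfl fun i _ ↦ by ring
  rw [this, hl, mixtureVariance]
  ring

theorem mixtureVariance_le_maxMeanSqDev [Nonempty ι] {l : ι → ℝ} (hl : l ∈ stdSimplex ℝ ι)
    (a : ℝ) : mixtureVariance μ κ l ≤ maxMeanSqDev μ κ a :=
  calc mixtureVariance μ κ l
      ≤ mixtureVariance μ κ l + (a - ∑ i, l i * μ i) ^ 2 := le_add_of_nonneg_right (sq_nonneg _)
    _ = ∑ i, l i * meanSqDev μ κ i a := (sum_mul_meanSqDev μ κ hl.2 a).symm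
    _ ≤ ∑ i, l i * maxMeanSqDev μ κ a :=
      sum_le_sum fun i _ ↦ mul_le_mul_of_nonneg_left (meanSqDev_le_maxMeanSqDev μ κ i a) (hl.1 i)
    _ = maxMeanSqDev μ κ a := by rw [← sum_mul, hl.2, one_mul]

theorem mixtureVariance_single [DecidableEq ι] (i : ι) :
    mixtureVariance μ κ (Pi.single i 1) = κ i - μ i ^ 2 := by
  simp [mixtureVariance, Pi.single_apply]

theorem mixtureVariance_pair [DecidableEq ι] (i j : ι) {s t : ℝ} (hst : s + t = 1) :
    mixtureVariance μ κ (s • Pi.single i 1 + t • Pi.single j 1)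
      = s * meanSqDev μ κ i (s * μ i + t * μ j) + t * meanSqDev μ κ j (s * μ i + t * μ j) := by
  have hsum (v : ι → ℝ) : ∑ k, (s • Pi.single i 1 + t • Pi.single j 1 : ι → ℝ) k * v k
      = s * v i + t * v j := by
    simp [add_mul, sum_add_distrib, Pi.single_apply]
  obtain rfl : s = 1 - t := by linarith
  simp only [mixtureVariance, hsum, meanSqDev]
  ring

theorem exists_meanSqDev_clamp_le_mixtureVariance {i j : ι} (hij : μ i < μ j) :
    ∃ l ∈ stdSimplex ℝ ι,
      meanSqDev μ κ i (min (max (μ i) ((κ j - κ i) / (2 * (μ j - μ i)))) (μ j))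
        ≤ mixtureVariance μ κ l := by
  classical
  set c₀ := (κ j - κ i) / (2 * (μ j - μ i))
  set c := min (max (μ i) c₀) (μ j)
  have hc : c ∈ segment ℝ (μ i) (μ j) := by
    rw [segment_eq_Icc hij.le]
    exact ⟨le_min (le_max_left _ _) hij.le, min_le_right _ _⟩
  obtain ⟨s, t, hs, ht, hst, hcst⟩ := hc
  simp only [smul_eq_mul] at hcst
  refine ⟨s • Pi.single i 1 + t • Pi.single j 1,
    convex_stdSimplex ℝ ι (single_mem_stdSimplex ℝ i) (single_mem_stdSimplex ℝ j) hs ht hst, ?_⟩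
  rw [mixtureVariance_pair μ κ i j hst, hcst]
  obtain rfl : s = 1 - t := by linarith
  have hc₀' : c₀ * (2 * (μ j - μ i)) = κ j - κ i := div_mul_cancel₀ _ (by linarith)
  have hclamp : 0 ≤ (c - μ i) * (c₀ - c) := sub_mul_sub_clamp_nonneg hij.le
  have hgap : (1 - t) * meanSqDev μ κ i c + t * meanSqDev μ κ j c
      = meanSqDev μ κ i c + 2 * ((c - μ i) * (c₀ - c)) := by
    unfold meanSqDev
    linear_combination (-t) * hc₀' + 2 * (c₀ - c) * hcst
  linarith

theorem continuous_maxMeanSqDev [Nonempty ι] : Continuous (maxMeanSqDev μ κ) :=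
  Continuous.finset_sup'_apply univ_nonempty fun i _ ↦ continuous_meanSqDev μ κ i

theorem eventually_maxMeanSqDev_lt_of_lt [Nonempty ι] {a : ℝ}
    (h : ∀ i, meanSqDev μ κ i a = maxMeanSqDev μ κ a → μ i < a) :
    ∀ᶠ b in 𝓝[<] a, maxMeanSqDev μ κ b < maxMeanSqDev μ κ a := by
  refine eventually_sup'_lt_of_active nhdsWithin_le_nhds
    (fun i ↦ (continuous_meanSqDev μ κ i).continuousAt) fun i hi ↦ ?_
  filter_upwards [Ioo_mem_nhdsLT (h i hi)] with b hb
  unfold meanSqDev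
  nlinarith [hb.1, hb.2]

theorem eventually_maxMeanSqDev_lt_of_gt [Nonempty ι] {a : ℝ}
    (h : ∀ i, meanSqDev μ κ i a = maxMeanSqDev μ κ a → a < μ i) :
    ∀ᶠ b in 𝓝[>] a, maxMeanSqDev μ κ b < maxMeanSqDev μ κ a := by
  refine eventually_sup'_lt_of_active nhdsWithin_le_nhds
    (fun i ↦ (continuous_meanSqDev μ κ i).continuousAt) fun i hi ↦ ?_
  filter_upwards [Ioo_mem_nhdsGT (h i hi)] with b hb
  unfold meanSqDev
  nlinarith [hb.1, hb.2]

theorem exists_balanced_minimizer_maxMeanSqDev [Nonempty ι] :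
    ∃ a, (∃ i, μ i = a ∧ meanSqDev μ κ i a = maxMeanSqDev μ κ a) ∨
      ∃ i j, μ i < a ∧ a < μ j ∧
        meanSqDev μ κ i a = maxMeanSqDev μ κ a ∧ meanSqDev μ κ j a = maxMeanSqDev μ κ a := by
  obtain ⟨iMin, hiMin⟩ := Finite.exists_min μ
  obtain ⟨iMax, hiMax⟩ := Finite.exists_max μ
  obtain ⟨a, ⟨hloa, hahi⟩, hmin⟩ := isCompact_Icc.exists_isMinOn (nonempty_Icc.2 (hiMin iMax))
    (continuous_maxMeanSqDev μ κ).continuousOn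
  refine ⟨a, ?_⟩
  -- If every active parabola has its vertex strictly left (right) of `a`, moving `a` slightly
  -- left (right) lowers all of them, contradicting minimality.
  by_contra! ⟨hvertex, hpair⟩
  have hne (i : ι) (hi : meanSqDev μ κ i a = maxMeanSqDev μ κ a) : μ i ≠ a :=
    fun h ↦ hvertex i h hi
  obtain ⟨i₀, -, hi₀⟩ := exists_mem_eq_sup' univ_nonempty fun i ↦ meanSqDev μ κ i a
  rcases (hne i₀ hi₀.symm).lt_or_gt with hlt | hgt
  · have hleft (i : ι) (hi : meanSqDev μ κ i a = maxMeanSqDev μ κ a) : μ i < a :=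
      (hne i hi).lt_of_le (not_lt.1 fun h ↦ hpair i₀ i hlt h hi₀.symm hi)
    obtain ⟨b, hb, hba⟩ := ((eventually_maxMeanSqDev_lt_of_lt μ κ hleft).and
      (Ioo_mem_nhdsLT ((hiMin i₀).trans_lt hlt))).exists
    exact (hmin ⟨hba.1.le, hba.2.le.trans hahi⟩).not_gt hb
  · have hright (i : ι) (hi : meanSqDev μ κ i a = maxMeanSqDev μ κ a) : a < μ i :=
      (hne i hi).symm.lt_of_le (not_lt.1 fun h ↦ hpair i i₀ h hgt hi hi₀.symm)
    obtain ⟨b, hb, hab⟩ := ((eventually_maxMeanSqDev_lt_of_gt μ κ hright).and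
      (Ioo_mem_nhdsGT (hgt.trans_le (hiMax i₀)))).exists
    exact (hmin ⟨hloa.trans hab.1.le, hab.2.le⟩).not_gt hb

end

/-- Exact solution of the quadratic program on the simplex: for sorted `μ_1 ≤ ⋯ ≤ μ_K` and
arbitrary `κ`, `max_{λ ∈ Δ^K}(λᵀκ - (λᵀμ)²)` equals the maximum of the values `κ_i - μ_i²`
and the pairwise values `h_{ij}(μ_{ij})`. -/
theorem upper_variance_stmt12
    {K : ℕ} (hK : 2 ≤ K) (μ κ : Fin K → ℝ) (hmono : Monotone μ) :
    (⨆ l : {l : Fin K → ℝ // (∀ i, 0 ≤ l i) ∧ ∑ i, l i = 1},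
        ((∑ i, l.1 i * κ i) - (∑ i, l.1 i * μ i) ^ 2))
      = max (⨆ i, (κ i - μ i ^ 2))
          ((Finset.univ.filter fun p : Fin K × Fin K => p.1 < p.2).sup'
            ⟨(⟨0, by omega⟩, ⟨1, by omega⟩), by
              exact Finset.mem_filter.mpr ⟨Finset.mem_univ _, Fin.mk_lt_mk.mpr (by omega)⟩⟩
            (fun p =>
              (fun x : ℝ => x ^ 2 - 2 * μ p.1 * x + κ p.1)
                (if μ p.1 < μ p.2 then
                  min (max (μ p.1) ((κ p.2 - κ p.1) / (2 * (μ p.2 - μ p.1)))) (μ p.2)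
                 else μ p.1))) := by
  classical
  have : Nonempty (Fin K) := ⟨⟨0, by omega⟩⟩
  change (⨆ l : stdSimplex ℝ (Fin K), mixtureVariance μ κ l) = _
  set S := ⨆ l : stdSimplex ℝ (Fin K), mixtureVariance μ κ l
  have hbdd : BddAbove (range fun l : stdSimplex ℝ (Fin K) ↦ mixtureVariance μ κ l) :=
    ⟨maxMeanSqDev μ κ 0, by rintro _ ⟨l, rfl⟩; exact mixtureVariance_le_maxMeanSqDev μ κ l.2 0⟩
  have hle (l : Fin K → ℝ) (hl : l ∈ stdSimplex ℝ (Fin K)) : mixtureVariance μ κ l ≤ S :=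
    le_ciSup hbdd ⟨l, hl⟩
  have hvertex (i : Fin K) : meanSqDev μ κ i (μ i) ≤ S := by
    rw [meanSqDev_self, ← mixtureVariance_single]
    exact hle _ (single_mem_stdSimplex ℝ i)
  apply le_antisymm
  · obtain ⟨a, ha⟩ := exists_balanced_minimizer_maxMeanSqDev μ κ
    refine ciSup_le fun l ↦ (mixtureVariance_le_maxMeanSqDev μ κ l.2 a).trans ?_
    rcases ha with ⟨i, rfl, hi⟩ | ⟨i, j, hia, haj, hi, hj⟩
    · rw [← hi, meanSqDev_self]
      exact le_max_of_le_left (le_ciSup (f := fun i ↦ κ i - μ i ^ 2) (finite_range _).bddAbove i)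
    · refine le_max_of_le_right (le_sup'_of_le _
        (mem_filter.2 ⟨mem_univ (i, j), hmono.reflect_lt (hia.trans haj)⟩) ?_)
      show _ ≤ meanSqDev μ κ i _
      rw [if_pos (hia.trans haj), clamp_eq_of_meanSqDev_eq μ κ hia haj (hi.trans hj.symm), hi]
  · refine max_le (ciSup_le fun i ↦ meanSqDev_self μ κ i ▸ hvertex i) (sup'_le _ _ fun p _ ↦ ?_)
    show meanSqDev μ κ p.1 _ ≤ _
    split_ifs with h
    · obtain ⟨l, hl, hpair⟩ := exists_meanSqDev_clamp_le_mixtureVariance μ κ h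
      exact hpair.trans (hle l hl)
    · exact hvertex p.1
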